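/- Let A = [A_{ij}] and B = [B_{ij}] be positive definite complex matrices of size nk × nk, each regarded as an n × n block matrix with k × k blocks, and let 2 ≤ μ ≤ n. Then the k × k matrix (A_μ ∘ B_μ)/(A_{μ−1} ∘ B_{μ−1}) + (A_μ/A_{μ−1}) ∘ (B_μ/B_{μ−1}) − A_{μμ} ∘ (B_μ/B_{μ−1}) − B_{μμ} ∘ (A_μ/A_{μ−1}) is positive semidefinite. -/

import Mathlib

open Matrix ComplexOrder

/-- The `μk × μk` leading principal block submatrix `A_μ` (for `μ ≤ n`) of an
`n × n` block matrix with `k × k` blocks. -/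
def leadBlock {n k : ℕ} (A : Matrix (Fin n × Fin k) (Fin n × Fin k) ℂ)
    (μ : ℕ) (h : μ ≤ n) : Matrix (Fin μ × Fin k) (Fin μ × Fin k) ℂ :=
  A.submatrix (fun p => (Fin.castLE h p.1, p.2)) (fun p => (Fin.castLE h p.1, p.2))

/-- The `μ`-th (1-based) diagonal `k × k` block `A_{μμ}` of an
`n × n` block matrix with `k × k` blocks. -/
def diagBlock {n k : ℕ} (A : Matrix (Fin n × Fin k) (Fin n × Fin k) ℂ)
    (μ : ℕ) (h : μ - 1 < n) : Matrix (Fin k) (Fin k) ℂ :=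
  Matrix.of fun a b => A (⟨μ - 1, h⟩, a) (⟨μ - 1, h⟩, b)

/-- The `k × k` Schur complement `A_μ / A_{μ-1}` of the leading principal block
submatrix `A_{μ-1}` in the leading principal block submatrix `A_μ`, i.e.
`A_{μμ} − M₂₁ A_{μ-1}⁻¹ M₁₂` where `M₂₁` (resp. `M₁₂`) is the `μ`-th block row
(resp. column) of `A_μ` with its last block removed. -/
noncomputable def schurLead {n k : ℕ} (A : Matrix (Fin n × Fin k) (Fin n × Fin k) ℂ)
    (μ : ℕ) (h : μ - 1 < n) : Matrix (Fin k) (Fin k) ℂ :=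
  diagBlock A μ h -
    (Matrix.of fun a (p : Fin (μ - 1) × Fin k) =>
        A (⟨μ - 1, h⟩, a) (Fin.castLE h.le p.1, p.2)) *
      (leadBlock A (μ - 1) h.le)⁻¹ *
      (Matrix.of fun (p : Fin (μ - 1) × Fin k) b =>
        A (Fin.castLE h.le p.1, p.2) (⟨μ - 1, h⟩, b))

/-!
With `P = B₁ᴴ M⁻¹ B₁`, the block matrix `[[M, B₁], [B₁ᴴ, P]]` is positive semidefinite, and so is
the analogous one for `N`, `B₂`, `Q`. By the Schur product theorem their Hadamard product
`[[M ∘ N, B₁ ∘ B₂], [(B₁ ∘ B₂)ᴴ, P ∘ Q]]` is positive semidefinite, hence so is the Schur complement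
`P ∘ Q − (B₁ ∘ B₂)ᴴ (M ∘ N)⁻¹ (B₁ ∘ B₂)`. Taking `M, N` the leading blocks `A_{μ-1}, B_{μ-1}`
and `B₁, B₂` the last block columns, the matrix of the theorem is exactly this Schur complement:
the terms involving `A_{μμ}` and `B_{μμ}` cancel.
-/

namespace Matrix

variable {ι m 𝕜 : Type*} [RCLike 𝕜]

theorem fromBlocks_hadamard_fromBlocks {α : Type*} [Mul α] (A A' : Matrix ι ι α)
    (B B' : Matrix ι m α) (C C' : Matrix m ι α) (D D' : Matrix m m α) :
    fromBlocks A B C D ⊙ fromBlocks A' B' C' D' = fromBlocks (A ⊙ A') (B ⊙ B') (C ⊙ C') (D ⊙ D') := by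
  ext (i | i) (j | j) <;> rfl

theorem hadamard_combination_eq {α : Type*} [CommRing α] (D E P Q W : Matrix ι m α) :
    D ⊙ E - W + (D - P) ⊙ (E - Q) - D ⊙ (E - Q) - E ⊙ (D - P) = P ⊙ Q - W := by
  ext i j
  simp only [sub_apply, add_apply, hadamard_apply]
  ring

variable [Fintype ι] [DecidableEq ι] [Finite m]

theorem PosDef.posSemidef_fromBlocks_conjTranspose_mul_inv_mul {M : Matrix ι ι 𝕜}
    (hM : M.PosDef) (B : Matrix ι m 𝕜) : (fromBlocks M B Bᴴ (Bᴴ * M⁻¹ * B)).PosSemidef := by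
  have := hM.isUnit.invertible
  rw [hM.fromBlocks₁₁, sub_self]
  exact .zero

theorem PosDef.posSemidef_hadamard_sub_hadamard_inv {M N : Matrix ι ι 𝕜}
    (hM : M.PosDef) (hN : N.PosDef) (B C : Matrix ι m 𝕜) :
    ((Bᴴ * M⁻¹ * B) ⊙ (Cᴴ * N⁻¹ * C) - (B ⊙ C)ᴴ * (M ⊙ N)⁻¹ * (B ⊙ C)).PosSemidef := by
  have hMN := hM.hadamard hN
  have := hMN.isUnit.invertible
  have hprod := (hM.posSemidef_fromBlocks_conjTranspose_mul_inv_mul B).hadamard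
    (hN.posSemidef_fromBlocks_conjTranspose_mul_inv_mul C)
  rwa [fromBlocks_hadamard_fromBlocks, ← hadamard_comm Cᴴ, ← conjTranspose_hadamard,
    hMN.fromBlocks₁₁] at hprod

end Matrix

section BlockMatrix

variable {n k : ℕ}

/-- The block column `M₁₂` above the diagonal block `A_{μμ}` in `A_μ`. -/
def blockCol (A : Matrix (Fin n × Fin k) (Fin n × Fin k) ℂ) (μ : ℕ) (h : μ - 1 < n) :
    Matrix (Fin (μ - 1) × Fin k) (Fin k) ℂ :=
  Matrix.of fun p b => A (Fin.castLE h.le p.1, p.2) (⟨μ - 1, h⟩, b)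

theorem leadBlock_hadamard (A B : Matrix (Fin n × Fin k) (Fin n × Fin k) ℂ) (μ : ℕ)
    (h : μ ≤ n) : leadBlock (A ⊙ B) μ h = leadBlock A μ h ⊙ leadBlock B μ h :=
  rfl

theorem diagBlock_hadamard (A B : Matrix (Fin n × Fin k) (Fin n × Fin k) ℂ) (μ : ℕ)
    (h : μ - 1 < n) : diagBlock (A ⊙ B) μ h = diagBlock A μ h ⊙ diagBlock B μ h :=
  rfl

theorem blockCol_hadamard (A B : Matrix (Fin n × Fin k) (Fin n × Fin k) ℂ) (μ : ℕ)
    (h : μ - 1 < n) : blockCol (A ⊙ B) μ h = blockCol A μ h ⊙ blockCol B μ h :=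
  rfl

theorem Matrix.PosDef.leadBlock {A : Matrix (Fin n × Fin k) (Fin n × Fin k) ℂ} (hA : A.PosDef)
    (μ : ℕ) (h : μ ≤ n) : (leadBlock A μ h).PosDef :=
  hA.submatrix fun p q hpq => by simpa [Prod.ext_iff, Fin.ext_iff] using hpq

theorem Matrix.IsHermitian.schurLead_eq {A : Matrix (Fin n × Fin k) (Fin n × Fin k) ℂ}
    (hA : A.IsHermitian) (μ : ℕ) (h : μ - 1 < n) :
    schurLead A μ h =
      diagBlock A μ h - (blockCol A μ h)ᴴ * (leadBlock A (μ - 1) h.le)⁻¹ * blockCol A μ h := by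
  have hrow : (Matrix.of fun a (p : Fin (μ - 1) × Fin k) =>
      A (⟨μ - 1, h⟩, a) (Fin.castLE h.le p.1, p.2)) = (blockCol A μ h)ᴴ := by
    ext a p
    exact (hA.apply _ _).symm
  rw [schurLead, hrow]
  rfl

end BlockMatrix

/-- Inequality (2.6): for positive definite block matrices `A, B ∈ M_n(M_k)` and
`2 ≤ μ ≤ n`, the `k × k` matrix
`(A_μ∘B_μ)/(A_{μ-1}∘B_{μ-1}) + (A_μ/A_{μ-1})∘(B_μ/B_{μ-1})
  − A_{μμ}∘(B_μ/B_{μ-1}) − B_{μμ}∘(A_μ/A_{μ-1})` is positive semidefinite. -/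
theorem schur_hadamard_combination_posSemidef {n k : ℕ}
    (A B : Matrix (Fin n × Fin k) (Fin n × Fin k) ℂ)
    (hA : A.PosDef) (hB : B.PosDef)
    (μ : ℕ) (hμ2 : 2 ≤ μ) (hμn : μ ≤ n) :
    (schurLead (Matrix.hadamard A B) μ (by omega) +
        Matrix.hadamard (schurLead A μ (by omega)) (schurLead B μ (by omega)) -
        Matrix.hadamard (diagBlock A μ (by omega)) (schurLead B μ (by omega)) -
        Matrix.hadamard (diagBlock B μ (by omega)) (schurLead A μ (by omega))).PosSemidef := by
  have h : μ - 1 < n := by omega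
  rw [(hA.hadamard hB).isHermitian.schurLead_eq μ h, hA.isHermitian.schurLead_eq μ h,
    hB.isHermitian.schurLead_eq μ h, diagBlock_hadamard, leadBlock_hadamard, blockCol_hadamard,
    hadamard_combination_eq]
  exact (hA.leadBlock _ h.le).posSemidef_hadamard_sub_hadamard_inv (hB.leadBlock _ h.le) _ _
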